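/- Let 0<q<1 be real, μ,μ0 real, and let x,ξ be nonzero complex numbers with x ∉ {q^{μ0+n}ξ : n ∈ ℤ} and x ∉ {q^{μ+n}ξ : n ∈ ℤ}. Then for every integer n, P²_{μ,μ0}(x,q^{n}ξ)/P¹_{μ,μ0}(x,q^{n}ξ) = (x/ξ)^{μ−μ0}·θ_q(q^{−μ0+1}x/ξ)/θ_q(q^{−μ+1}x/ξ); in particular this ratio is independent of n. -/

import Mathlib

open Filter Topology

/-- The infinite q-Pochhammer symbol `(a;q)_∞ = ∏_{j=0}^∞ (1 - q^j a)`. -/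
noncomputable def qPochInf (q : ℝ) (a : ℂ) : ℂ := ∏' j : ℕ, (1 - (q : ℂ) ^ j * a)

/-- `q^r` for a real exponent `r`, using the principal branch of the complex power. -/
noncomputable def qpow (q : ℝ) (r : ℝ) : ℂ := (q : ℂ) ^ (r : ℂ)

/-- `P¹_{μ,μ0}(x,s) = (q^μ s/x;q)_∞ / (q^{μ0} s/x;q)_∞`. -/
noncomputable def P1 (q μ μ0 : ℝ) (x s : ℂ) : ℂ :=
  qPochInf q (qpow q μ * s / x) / qPochInf q (qpow q μ0 * s / x)

/-- `P²_{μ,μ0}(x,s) = (x/s)^{μ-μ0} (q^{-μ0+1} x/s;q)_∞ / (q^{-μ+1} x/s;q)_∞`. -/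
noncomputable def P2 (q μ μ0 : ℝ) (x s : ℂ) : ℂ :=
  (x / s) ^ ((μ - μ0 : ℝ) : ℂ) *
    (qPochInf q (qpow q (-μ0 + 1) * x / s) / qPochInf q (qpow q (-μ + 1) * x / s))

/-- The theta function `θ_q(t) = (t;q)_∞ (q/t;q)_∞ (q;q)_∞`. -/
noncomputable def thetaQ (q : ℝ) (t : ℂ) : ℂ :=
  qPochInf q t * qPochInf q ((q : ℂ) / t) * qPochInf q (q : ℂ)


section helpers

variable {q : ℝ}

lemma qsummable (hq0 : 0 < q) (hq1 : q < 1) (a : ℂ) :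
    Summable (fun j : ℕ => Complex.log (1 - (q : ℂ) ^ j * a)) := by
  have hgeo : Summable (fun j : ℕ => (3 / 2 : ℝ) * ‖a‖ * q ^ j) :=
    (summable_geometric_of_lt_one hq0.le hq1).mul_left _
  apply Summable.of_norm_bounded_eventually_nat hgeo
  have htend : Tendsto (fun j : ℕ => q ^ j * ‖a‖) atTop (nhds 0) := by
    simpa using (tendsto_pow_atTop_nhds_zero_of_lt_one hq0.le hq1).mul_const ‖a‖
  filter_upwards [htend.eventually (eventually_le_nhds (by norm_num : (0:ℝ) < 1/2))] with j hj
  have hz : ‖-((q : ℂ) ^ j * a)‖ ≤ 1 / 2 := by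
    rw [norm_neg, norm_mul, norm_pow, Complex.norm_real, Real.norm_eq_abs,
      abs_of_pos hq0]
    exact hj
  have := Complex.norm_log_one_add_half_le_self hz
  rw [show (1 : ℂ) + -((q : ℂ) ^ j * a) = 1 - (q : ℂ) ^ j * a by ring] at this
  refine this.trans (le_of_eq ?_)
  rw [norm_neg, norm_mul, norm_pow, Complex.norm_real, Real.norm_eq_abs, abs_of_pos hq0]
  ring

lemma qPoch_eq_exp (hq0 : 0 < q) (hq1 : q < 1) (a : ℂ)
    (ha : ∀ j : ℕ, 1 - (q : ℂ) ^ j * a ≠ 0) :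
    qPochInf q a = Complex.exp (∑' j : ℕ, Complex.log (1 - (q : ℂ) ^ j * a)) := by
  have := Complex.cexp_tsum_eq_tprod (f := fun j => 1 - (q : ℂ) ^ j * a)
    (fun j => ha j) (qsummable hq0 hq1 a)
  exact this.symm

lemma qPoch_ne_zero (hq0 : 0 < q) (hq1 : q < 1) (a : ℂ)
    (ha : ∀ j : ℕ, 1 - (q : ℂ) ^ j * a ≠ 0) : qPochInf q a ≠ 0 := by
  rw [qPoch_eq_exp hq0 hq1 a ha]; exact Complex.exp_ne_zero _

lemma qPoch_multipliable (hq0 : 0 < q) (hq1 : q < 1) (a : ℂ)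
    (ha : ∀ j : ℕ, 1 - (q : ℂ) ^ j * a ≠ 0) :
    Multipliable (fun j : ℕ => 1 - (q : ℂ) ^ j * a) :=
  Complex.multipliable_of_summable_log (qsummable hq0 hq1 a)

set_option maxHeartbeats 1000000 in
lemma qPoch_rec (hq0 : 0 < q) (hq1 : q < 1) (a : ℂ)
    (ha : ∀ j : ℕ, 1 - (q : ℂ) ^ j * a ≠ 0) :
    qPochInf q a = (1 - a) * qPochInf q ((q : ℂ) * a) := by
  have ha' : ∀ j : ℕ, 1 - (q : ℂ) ^ j * ((q : ℂ) * a) ≠ 0 := by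
    intro j
    have := ha (j + 1)
    rw [show (1 : ℂ) - (q:ℂ) ^ (j+1) * a = 1 - (q:ℂ) ^ j * ((q:ℂ) * a) by ring] at this
    exact this
  have hm : Multipliable (fun n : ℕ => 1 - (q : ℂ) ^ (n + 1) * a) :=
    (qPoch_multipliable hq0 hq1 ((q : ℂ) * a) ha').congr (fun n => by ring)
  have h := tprod_eq_zero_mul' (f := fun n : ℕ => 1 - (q : ℂ) ^ n * a) hm
  rw [qPochInf, h]
  rw [pow_zero, one_mul]
  congr 1
  rw [qPochInf]
  exact tprod_congr fun j => by ring

end helpers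

section theta

variable {q : ℝ}

lemma hqne (hq0 : 0 < q) : (q : ℂ) ≠ 0 := by
  exact_mod_cast hq0.ne'

lemma fac (hq0 : 0 < q) {c : ℂ} (hc : ∀ m : ℤ, c ≠ (q : ℂ) ^ m) :
    ∀ j : ℕ, 1 - (q : ℂ) ^ j * c ≠ 0 := by
  intro j h
  apply hc (-(j : ℤ))
  have h1 : (q : ℂ) ^ (j : ℤ) * c = 1 := by
    rw [zpow_natCast]; linear_combination -h
  rw [zpow_neg]
  exact (inv_eq_of_mul_eq_one_right h1).symm

lemma facq (hq0 : 0 < q) (hq1 : q < 1) :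
    ∀ j : ℕ, 1 - (q : ℂ) ^ j * (q : ℂ) ≠ 0 := by
  intro j h
  have h1 : ((q ^ (j + 1) : ℝ) : ℂ) = 1 := by push_cast; linear_combination -h
  have h2 : (q : ℝ) ^ (j + 1) = 1 := by exact_mod_cast h1
  have h3 : (q : ℝ) ^ (j + 1) < 1 := pow_lt_one₀ hq0.le hq1 (Nat.succ_ne_zero j)
  linarith

lemma hA_shift (hq0 : 0 < q) {w : ℂ} (hA : ∀ m : ℤ, w ≠ (q : ℂ) ^ m) (k : ℤ) :
    ∀ m : ℤ, (q : ℂ) ^ k * w ≠ (q : ℂ) ^ m := by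
  intro m h
  apply hA (m - k)
  have hqk : ((q : ℂ) ^ k) ≠ 0 := zpow_ne_zero k (hqne hq0)
  rw [zpow_sub₀ (hqne hq0), eq_div_iff hqk]
  linear_combination h

lemma hA_inv (hq0 : 0 < q) {w : ℂ} (hw0 : w ≠ 0) (hA : ∀ m : ℤ, w ≠ (q : ℂ) ^ m) :
    ∀ m : ℤ, w⁻¹ ≠ (q : ℂ) ^ m := by
  intro m h
  apply hA (-m)
  rw [zpow_neg, ← h, inv_inv]

lemma hA_div (hq0 : 0 < q) {w : ℂ} (hw0 : w ≠ 0) (hA : ∀ m : ℤ, w ≠ (q : ℂ) ^ m) (k : ℤ) :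
    ∀ m : ℤ, (q : ℂ) / ((q : ℂ) ^ k * w) ≠ (q : ℂ) ^ m := by
  intro m h
  apply hA (1 - k - m)
  have hqk : ((q : ℂ) ^ k) ≠ 0 := zpow_ne_zero k (hqne hq0)
  rw [div_eq_iff (mul_ne_zero hqk hw0)] at h
  have hqm : ((q : ℂ) ^ m) ≠ 0 := zpow_ne_zero m (hqne hq0)
  rw [zpow_sub₀ (hqne hq0), zpow_sub₀ (hqne hq0), zpow_one, div_div,
    eq_div_iff (mul_ne_zero hqk hqm)]
  linear_combination -h

lemma theta_ne (hq0 : 0 < q) (hq1 : q < 1) {w : ℂ} (hw0 : w ≠ 0)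
    (hA : ∀ m : ℤ, w ≠ (q : ℂ) ^ m) (k : ℤ) : thetaQ q ((q : ℂ) ^ k * w) ≠ 0 := by
  apply mul_ne_zero (mul_ne_zero ?_ ?_) ?_
  · exact qPoch_ne_zero hq0 hq1 _ (fac hq0 (hA_shift hq0 hA k))
  · exact qPoch_ne_zero hq0 hq1 _ (fac hq0 (hA_div hq0 hw0 hA k))
  · exact qPoch_ne_zero hq0 hq1 _ (facq hq0 hq1)

lemma theta_step' (hq0 : 0 < q) (hq1 : q < 1) {v : ℂ} (hv0 : v ≠ 0)
    (hA : ∀ m : ℤ, v ≠ (q : ℂ) ^ m) :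
    thetaQ q v = -v * thetaQ q ((q : ℂ) * v) := by
  have hdiv : (q : ℂ) / ((q : ℂ) * v) = v⁻¹ := by
    rw [div_mul_eq_div_div, div_self (hqne hq0), one_div]
  rw [thetaQ, thetaQ, hdiv, qPoch_rec hq0 hq1 v (fac hq0 hA),
    qPoch_rec hq0 hq1 v⁻¹ (fac hq0 (hA_inv hq0 hv0 hA)),
    show (q : ℂ) * v⁻¹ = (q : ℂ) / v from (div_eq_mul_inv _ _).symm]
  field_simp
  ring

end theta

section key

variable {q : ℝ}

lemma hA_shift_nat (hq0 : 0 < q) {w : ℂ} (hA : ∀ m : ℤ, w ≠ (q : ℂ) ^ m) (i : ℕ) :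
    ∀ m : ℤ, (q : ℂ) ^ i * w ≠ (q : ℂ) ^ m := by
  intro m
  have := hA_shift hq0 hA (i : ℤ) m
  rwa [zpow_natCast] at this

lemma keyNat (hq0 : 0 < q) (hq1 : q < 1) {w0 w1 E : ℂ} (hw0 : w0 ≠ 0) (hw1 : w1 ≠ 0)
    (hA0 : ∀ m : ℤ, w0 ≠ (q : ℂ) ^ m) (hA1 : ∀ m : ℤ, w1 ≠ (q : ℂ) ^ m)
    (hE : w0 = E * w1) :
    ∀ i : ℕ, E ^ i * thetaQ q ((q : ℂ) ^ i * w0) * thetaQ q w1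
      = thetaQ q w0 * thetaQ q ((q : ℂ) ^ i * w1) := by
  intro i
  induction i with
  | zero => simp
  | succ i IH =>
    have hqi : ((q : ℂ) ^ i) ≠ 0 := pow_ne_zero i (hqne hq0)
    have h0 : thetaQ q ((q : ℂ) ^ i * w0)
        = -((q : ℂ) ^ i * w0) * thetaQ q ((q : ℂ) ^ (i + 1) * w0) := by
      rw [theta_step' hq0 hq1 (mul_ne_zero hqi hw0) (hA_shift_nat hq0 hA0 i)]
      ring_nf
    have h1 : thetaQ q ((q : ℂ) ^ i * w1)
        = -((q : ℂ) ^ i * w1) * thetaQ q ((q : ℂ) ^ (i + 1) * w1) := by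
      rw [theta_step' hq0 hq1 (mul_ne_zero hqi hw1) (hA_shift_nat hq0 hA1 i)]
      ring_nf
    rw [h0, h1] at IH
    apply mul_left_cancel₀ (show -((q : ℂ) ^ i * w1) ≠ 0 from
      neg_ne_zero.mpr (mul_ne_zero hqi hw1))
    rw [hE] at IH ⊢
    rw [pow_succ]
    linear_combination IH

lemma keyInt (hq0 : 0 < q) (hq1 : q < 1) {w0 w1 E : ℂ} (hw0 : w0 ≠ 0) (hw1 : w1 ≠ 0)
    (hA0 : ∀ m : ℤ, w0 ≠ (q : ℂ) ^ m) (hA1 : ∀ m : ℤ, w1 ≠ (q : ℂ) ^ m)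
    (hE : w0 = E * w1) :
    ∀ m : ℤ, E ^ m * thetaQ q ((q : ℂ) ^ m * w0) * thetaQ q w1
      = thetaQ q w0 * thetaQ q ((q : ℂ) ^ m * w1) := by
  have hE0 : E ≠ 0 := by
    intro h; apply hw0; rw [hE, h, zero_mul]
  intro m
  induction m using Int.induction_on with
  | zero => simp
  | succ i _ =>
    have := keyNat hq0 hq1 hw0 hw1 hA0 hA1 hE (i + 1)
    rw [show ((i : ℤ) + 1) = ((i + 1 : ℕ) : ℤ) by push_cast; ring, zpow_natCast, zpow_natCast]
    exact this
  | pred i _ =>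
    -- claim at m = -(i+1)
    set j : ℕ := i + 1 with hj
    have hmj : (-(i : ℤ) - 1) = -(j : ℤ) := by rw [hj]; push_cast; ring
    rw [hmj]
    -- apply keyNat with w0' = q^(-j) w0, w1' = q^(-j) w1
    have hqj : ((q : ℂ) ^ (-(j : ℤ))) ≠ 0 := zpow_ne_zero _ (hqne hq0)
    set w0' := (q : ℂ) ^ (-(j : ℤ)) * w0 with hw0'
    set w1' := (q : ℂ) ^ (-(j : ℤ)) * w1 with hw1'
    have key := keyNat hq0 hq1 (mul_ne_zero hqj hw0) (mul_ne_zero hqj hw1)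
      (hA_shift hq0 hA0 _) (hA_shift hq0 hA1 _)
      (show w0' = E * w1' by rw [hw0', hw1', hE]; ring) j
    have hback0 : (q : ℂ) ^ j * w0' = w0 := by
      rw [hw0', ← mul_assoc, ← zpow_natCast (q : ℂ) j, ← zpow_add₀ (hqne hq0)]
      simp
    have hback1 : (q : ℂ) ^ j * w1' = w1 := by
      rw [hw1', ← mul_assoc, ← zpow_natCast (q : ℂ) j, ← zpow_add₀ (hqne hq0)]
      simp
    rw [hback0, hback1] at key
    -- key : E ^ j * thetaQ q w0 * thetaQ q w1' = thetaQ q w0' * thetaQ q w1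
    rw [← zpow_natCast E j] at key
    rw [zpow_neg]
    rw [inv_mul_eq_div, div_mul_eq_mul_div, eq_comm, eq_div_iff (zpow_ne_zero _ hE0)]
    linear_combination key

section cpowHelp

variable {q : ℝ}

lemma cpow_real_mul {r : ℝ} (hr : 0 < r) {z : ℂ} (hz : z ≠ 0) (c : ℂ) :
    ((r : ℂ) * z) ^ c = (r : ℂ) ^ c * z ^ c := by
  have hr0 : (r : ℂ) ≠ 0 := by exact_mod_cast hr.ne'
  rw [Complex.cpow_def_of_ne_zero (mul_ne_zero hr0 hz), Complex.cpow_def_of_ne_zero hr0,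
    Complex.cpow_def_of_ne_zero hz, Complex.log_ofReal_mul hr hz,
    ← Complex.ofReal_log hr.le, add_mul, Complex.exp_add]

lemma cpow_q_zpow (hq0 : 0 < q) (n : ℤ) (c : ℂ) :
    ((q ^ n : ℝ) : ℂ) ^ c = ((q : ℂ) ^ c) ^ n := by
  have h1 : ((q ^ n : ℝ) : ℂ) ≠ 0 := Complex.ofReal_ne_zero.mpr (zpow_pos hq0 n).ne'
  rw [Complex.cpow_def_of_ne_zero h1, Complex.cpow_def_of_ne_zero (hqne hq0),
    ← Complex.ofReal_log (zpow_pos hq0 n).le, ← Complex.ofReal_log hq0.le,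
    Real.log_zpow, ← Complex.exp_int_mul]
  congr 1
  push_cast
  ring

lemma qpow_ne (hq0 : 0 < q) (r : ℝ) : qpow q r ≠ 0 := by
  rw [qpow, Complex.cpow_def_of_ne_zero (hqne hq0)]
  exact Complex.exp_ne_zero _

lemma qpow_add (hq0 : 0 < q) (r s : ℝ) : qpow q (r + s) = qpow q r * qpow q s := by
  rw [qpow, qpow, qpow]
  push_cast
  exact Complex.cpow_add _ _ (hqne hq0)

lemma qpow_one' : qpow q 1 = (q : ℂ) := by
  rw [qpow]
  push_cast
  exact Complex.cpow_one _

lemma qpow_zero' : qpow q 0 = 1 := by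
  rw [qpow]
  push_cast
  exact Complex.cpow_zero _

lemma qpow_int (hq0 : 0 < q) (r : ℝ) (k : ℤ) :
    qpow q (r + k) = qpow q r * (q : ℂ) ^ k := by
  rw [qpow_add hq0]
  congr 1
  rw [qpow]
  push_cast
  exact Complex.cpow_intCast _ _

end cpowHelp

theorem stmt6 (q : ℝ) (hq0 : 0 < q) (hq1 : q < 1) (μ μ0 : ℝ)
    (x ξ : ℂ) (hx : x ≠ 0) (hξ : ξ ≠ 0)
    (hres0 : ∀ n : ℤ, x ≠ qpow q (μ0 + n) * ξ)
    (hres1 : ∀ n : ℤ, x ≠ qpow q (μ + n) * ξ) :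
    ∀ n : ℤ,
      P2 q μ μ0 x ((q : ℂ) ^ n * ξ) / P1 q μ μ0 x ((q : ℂ) ^ n * ξ)
        = (x / ξ) ^ ((μ - μ0 : ℝ) : ℂ) *
            thetaQ q (qpow q (-μ0 + 1) * x / ξ) / thetaQ q (qpow q (-μ + 1) * x / ξ) := by
  intro n
  have hq : (q : ℂ) ≠ 0 := hqne hq0
  set c : ℂ := ((μ - μ0 : ℝ) : ℂ) with hc
  set w0 : ℂ := qpow q (-μ0 + 1) * x / ξ with hw0def
  set w1 : ℂ := qpow q (-μ + 1) * x / ξ with hw1def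
  have hw00 : w0 ≠ 0 := div_ne_zero (mul_ne_zero (qpow_ne hq0 _) hx) hξ
  have hw10 : w1 ≠ 0 := div_ne_zero (mul_ne_zero (qpow_ne hq0 _) hx) hξ
  -- residue conditions
  have hA : ∀ (ν : ℝ), (∀ m : ℤ, x ≠ qpow q (ν + m) * ξ) →
      ∀ m : ℤ, qpow q (-ν + 1) * x / ξ ≠ (q : ℂ) ^ m := by
    intro ν hres m h
    apply hres (m - 1)
    have e1 : qpow q (ν + ((m - 1 : ℤ) : ℝ)) = qpow q (ν - 1) * (q : ℂ) ^ m := by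
      rw [show (ν + ((m - 1 : ℤ) : ℝ)) = (ν - 1) + (m : ℤ) by push_cast; ring,
        qpow_int hq0]
    have e2 : qpow q (-ν + 1) * qpow q (ν - 1) = 1 := by
      rw [← qpow_add hq0, show (-ν + 1) + (ν - 1) = 0 by ring, qpow_zero']
    rw [div_eq_iff hξ] at h
    rw [e1]
    linear_combination qpow q (ν - 1) * h - x * e2
  have hA0 : ∀ m : ℤ, w0 ≠ (q : ℂ) ^ m := hA μ0 hres0
  have hA1 : ∀ m : ℤ, w1 ≠ (q : ℂ) ^ m := hA μ hres1
  set E : ℂ := qpow q (μ - μ0) with hEdef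
  have hE : w0 = E * w1 := by
    rw [hw0def, hw1def, hEdef]
    have : qpow q (-μ0 + 1) = qpow q (μ - μ0) * qpow q (-μ + 1) := by
      rw [← qpow_add hq0, show (μ - μ0) + (-μ + 1) = -μ0 + 1 by ring]
    rw [this]
    ring
  set u0 : ℂ := (q : ℂ) ^ (-n) * w0 with hu0def
  set u1 : ℂ := (q : ℂ) ^ (-n) * w1 with hu1def
  have hP : ((q : ℂ) ^ n) ≠ 0 := zpow_ne_zero n hq
  have hPn : ((q : ℂ) ^ (-n)) ≠ 0 := zpow_ne_zero _ hq
  have hu00 : u0 ≠ 0 := mul_ne_zero hPn hw00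
  have hu10 : u1 ≠ 0 := mul_ne_zero hPn hw10
  -- rewrite the four pochhammer arguments
  have Cb0 : qpow q (-μ0 + 1) * x / ((q : ℂ) ^ n * ξ) = u0 := by
    rw [hu0def, hw0def, zpow_neg]
    field_simp
  have Cb1 : qpow q (-μ + 1) * x / ((q : ℂ) ^ n * ξ) = u1 := by
    rw [hu1def, hw1def, zpow_neg]
    field_simp
  have hmulq : ∀ ν : ℝ, qpow q ν * qpow q (-ν + 1) = (q : ℂ) := by
    intro ν
    rw [← qpow_add hq0, show ν + (-ν + 1) = 1 by ring, qpow_one']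
  have Ca : ∀ ν : ℝ, qpow q ν * ((q : ℂ) ^ n * ξ) / x
      = (q : ℂ) / ((q : ℂ) ^ (-n) * (qpow q (-ν + 1) * x / ξ)) := by
    intro ν
    have hwν : qpow q (-ν + 1) * x / ξ ≠ 0 :=
      div_ne_zero (mul_ne_zero (qpow_ne hq0 _) hx) hξ
    rw [div_eq_div_iff hx (mul_ne_zero hPn hwν), zpow_neg]
    field_simp
    linear_combination hmulq ν
  have Ca1 : qpow q μ * ((q : ℂ) ^ n * ξ) / x = (q : ℂ) / u1 := by
    rw [Ca μ, ← hw1def, ← hu1def]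
  have Ca0 : qpow q μ0 * ((q : ℂ) ^ n * ξ) / x = (q : ℂ) / u0 := by
    rw [Ca μ0, ← hw0def, ← hu0def]
  -- the power factor
  have hxs : x / ((q : ℂ) ^ n * ξ) = ((q ^ (-n) : ℝ) : ℂ) * (x / ξ) := by
    push_cast
    rw [zpow_neg]
    field_simp
  have hpow : (x / ((q : ℂ) ^ n * ξ)) ^ c = E ^ (-n) * (x / ξ) ^ c := by
    rw [hxs, cpow_real_mul (zpow_pos hq0 (-n)) (div_ne_zero hx hξ) c,
      cpow_q_zpow hq0 (-n) c, hEdef, qpow, hc]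
  -- nonvanishing facts
  have hPochq : qPochInf q (q : ℂ) ≠ 0 := qPoch_ne_zero hq0 hq1 _ (facq hq0 hq1)
  have hA0' := hA_shift hq0 hA0 (-n)
  have hA1' := hA_shift hq0 hA1 (-n)
  have hNu0 : qPochInf q u0 ≠ 0 := qPoch_ne_zero hq0 hq1 _ (fac hq0 hA0')
  have hNu1 : qPochInf q u1 ≠ 0 := qPoch_ne_zero hq0 hq1 _ (fac hq0 hA1')
  have hNqu0 : qPochInf q ((q : ℂ) / u0) ≠ 0 :=
    qPoch_ne_zero hq0 hq1 _ (fac hq0 (hA_div hq0 hw00 hA0 (-n)))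
  have hNqu1 : qPochInf q ((q : ℂ) / u1) ≠ 0 :=
    qPoch_ne_zero hq0 hq1 _ (fac hq0 (hA_div hq0 hw10 hA1 (-n)))
  have hNw0 : qPochInf q w0 ≠ 0 := by
    have := fac hq0 hA0
    exact qPoch_ne_zero hq0 hq1 _ this
  have hNw1 : qPochInf q w1 ≠ 0 := qPoch_ne_zero hq0 hq1 _ (fac hq0 hA1)
  have hNqw0 : qPochInf q ((q : ℂ) / w0) ≠ 0 := by
    have h := hA_div hq0 hw00 hA0 0
    simp only [zpow_zero, one_mul] at h
    exact qPoch_ne_zero hq0 hq1 _ (fac hq0 h)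
  have hNqw1 : qPochInf q ((q : ℂ) / w1) ≠ 0 := by
    have h := hA_div hq0 hw10 hA1 0
    simp only [zpow_zero, one_mul] at h
    exact qPoch_ne_zero hq0 hq1 _ (fac hq0 h)
  have hE0 : E ≠ 0 := qpow_ne hq0 _
  -- the key identity
  have K := keyInt hq0 hq1 hw00 hw10 hA0 hA1 hE (-n)
  rw [← hu0def, ← hu1def] at K
  -- put everything together
  rw [P1, P2, Ca1, Ca0, Cb0, Cb1, hpow]
  have hEn : E ^ n ≠ 0 := zpow_ne_zero n hE0
  have K2 : thetaQ q u0 * thetaQ q w1 = E ^ n * (thetaQ q w0 * thetaQ q u1) := by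
    rw [← K, zpow_neg]
    field_simp
  rw [zpow_neg]
  simp only [thetaQ] at K2 ⊢
  have K3 : qPochInf q u0 * qPochInf q ((q:ℂ)/u0) * (qPochInf q w1 * qPochInf q ((q:ℂ)/w1))
        * qPochInf q (q:ℂ)
      = E ^ n * (qPochInf q w0 * qPochInf q ((q:ℂ)/w0) * (qPochInf q u1 * qPochInf q ((q:ℂ)/u1)))
        * qPochInf q (q:ℂ) := by
    apply mul_right_cancel₀ hPochq
    linear_combination K2
  field_simp [hNu0, hNu1, hNqu0, hNqu1, hNw0, hNw1, hNqw0, hNqw1, hPochq, hEn]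
  linear_combination (x / ξ) ^ c * (mul_right_cancel₀ hPochq K3)
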